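/- Fix λ > 1 and d ∈ ℝ. Then there exists a unique p with p > 0 and p² > |d| such that x = y = p satisfies the criticality equation, i.e., L + M p²/√(p⁴−d²) = 2√(A(p,p,d)); equivalently p = φ(p,d) where φ(y,d) is the unique solution x ∈ (|d|/y, ∞) of L + M y²/√(x²y²−d²) = 2√(A(x,y,d)). -/
import Mathlib


noncomputable section

def Afun (l x y d : ℝ) : ℝ :=
  (x ^ 2 + y ^ 2) * (l ^ 2 + 1 / l ^ 2) / 2
    + (l ^ 2 - 1 / l ^ 2) * Real.sqrt (x ^ 2 * y ^ 2 - d ^ 2) + 2 * d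

namespace DiagFP

/-- helper: from squares to values -/
lemma le_of_sq_le_sq {a b : ℝ} (ha : 0 ≤ a) (hb : 0 ≤ b) (h : a ^ 2 ≤ b ^ 2) : a ≤ b := by
  have := Real.sqrt_le_sqrt h
  rwa [Real.sqrt_sq ha, Real.sqrt_sq hb] at this

/-- The auxiliary function inside the square root, as a function of `t = p²`. -/
def Aa (L M d t : ℝ) : ℝ := L * t + M * Real.sqrt (t ^ 2 - d ^ 2) + 2 * d

/-- `h = LHS - RHS` of the criticality equation, as a function of `t = p²`. -/
def h (L M d t : ℝ) : ℝ :=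
  L + M * t / Real.sqrt (t ^ 2 - d ^ 2) - 2 * Real.sqrt (Aa L M d t)

variable {L M d t : ℝ}

lemma sub_sq_pos (ht : |d| < t) : 0 < t ^ 2 - d ^ 2 := by
  have h1 : 0 ≤ |d| := abs_nonneg d
  have h2 : d ^ 2 = |d| ^ 2 := (sq_abs d).symm
  nlinarith

lemma S_pos (ht : |d| < t) : 0 < Real.sqrt (t ^ 2 - d ^ 2) :=
  Real.sqrt_pos.mpr (sub_sq_pos ht)

lemma S_sq (ht : |d| < t) : Real.sqrt (t ^ 2 - d ^ 2) ^ 2 = t ^ 2 - d ^ 2 :=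
  Real.sq_sqrt (sub_sq_pos ht).le

lemma t_pos (ht : |d| < t) : 0 < t := lt_of_le_of_lt (abs_nonneg d) ht

lemma S_le (ht : |d| < t) : Real.sqrt (t ^ 2 - d ^ 2) ≤ t := by
  have := Real.sqrt_le_sqrt (show t ^ 2 - d ^ 2 ≤ t ^ 2 by nlinarith [sq_nonneg d])
  rwa [Real.sqrt_sq (t_pos ht).le] at this

lemma Aa_pos (hL : 2 < L) (hM : 0 < M) (ht : |d| < t) : 0 < Aa L M d t := by
  have hs : 0 ≤ Real.sqrt (t ^ 2 - d ^ 2) := Real.sqrt_nonneg _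
  have h1 : -|d| ≤ d := neg_abs_le d
  have h2 : 0 ≤ |d| := abs_nonneg d
  unfold Aa
  nlinarith

lemma Aa_le (hL : 2 < L) (hM : 0 < M) (ht : |d| < t) : Aa L M d t ≤ (L + M + 2) * t := by
  have hs := S_le ht
  have h1 : d ≤ |d| := le_abs_self d
  unfold Aa
  nlinarith

lemma h_strictAntiOn (hL : 2 < L) (hM : 0 < M) :
    StrictAntiOn (h L M d) (Set.Ioi |d|) := by
  intro t₁ h₁ t₂ h₂ hlt
  simp only [Set.mem_Ioi] at h₁ h₂
  set s₁ := Real.sqrt (t₁ ^ 2 - d ^ 2) with hs₁def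
  set s₂ := Real.sqrt (t₂ ^ 2 - d ^ 2) with hs₂def
  have hs₁ : 0 < s₁ := S_pos h₁
  have hs₂ : 0 < s₂ := S_pos h₂
  have hs₁sq : s₁ ^ 2 = t₁ ^ 2 - d ^ 2 := S_sq h₁
  have hs₂sq : s₂ ^ 2 = t₂ ^ 2 - d ^ 2 := S_sq h₂
  have ht₁ : 0 < t₁ := t_pos h₁
  have ht₂ : 0 < t₂ := t_pos h₂
  -- F antitone
  have key : t₂ * s₁ ≤ t₁ * s₂ := by
    apply le_of_sq_le_sq (by positivity) (by positivity)
    have ht12 : t₁ ^ 2 ≤ t₂ ^ 2 := by nlinarith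
    have hd : d ^ 2 * t₁ ^ 2 ≤ d ^ 2 * t₂ ^ 2 :=
      mul_le_mul_of_nonneg_left ht12 (sq_nonneg d)
    calc (t₂ * s₁) ^ 2 = t₂ ^ 2 * (t₁ ^ 2 - d ^ 2) := by rw [mul_pow, hs₁sq]
    _ ≤ t₁ ^ 2 * (t₂ ^ 2 - d ^ 2) := by nlinarith
    _ = (t₁ * s₂) ^ 2 := by rw [mul_pow, hs₂sq]
  have hF : M * t₂ / s₂ ≤ M * t₁ / s₁ := by
    rw [div_le_div_iff₀ hs₂ hs₁]
    nlinarith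
  -- G strictly monotone
  have hsle : s₁ ≤ s₂ := Real.sqrt_le_sqrt (by nlinarith)
  have hAlt : Aa L M d t₁ < Aa L M d t₂ := by
    unfold Aa
    rw [← hs₁def, ← hs₂def]
    nlinarith
  have hG : Real.sqrt (Aa L M d t₁) < Real.sqrt (Aa L M d t₂) :=
    Real.sqrt_lt_sqrt (Aa_pos hL hM h₁).le hAlt
  unfold h
  rw [← hs₁def, ← hs₂def]
  linarith

lemma h_contOn {a b : ℝ} (ha : |d| < a) : ContinuousOn (h L M d) (Set.Icc a b) := by
  unfold h Aa
  apply ContinuousOn.sub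
  · apply ContinuousOn.add continuousOn_const
    apply ContinuousOn.div
    · exact (continuous_const.mul continuous_id).continuousOn
    · exact (Real.continuous_sqrt.comp (by continuity)).continuousOn
    · intro x hx
      exact (S_pos (lt_of_lt_of_le ha hx.1)).ne'
  · exact (continuous_const.mul (Real.continuous_sqrt.comp (by continuity))).continuousOn

/-- General sufficient condition for `0 ≤ h t`. -/
lemma h_nonneg (hL : 2 < L) (hM : 0 < M) (ht : |d| < t)
    (hb : 4 * (L + M + 2) * t * (t ^ 2 - d ^ 2) ≤ L ^ 2 * (t ^ 2 - d ^ 2) + M ^ 2 * t ^ 2) :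
    0 ≤ h L M d t := by
  set s := Real.sqrt (t ^ 2 - d ^ 2) with hsdef
  have hs : 0 < s := S_pos ht
  have hssq : s ^ 2 = t ^ 2 - d ^ 2 := S_sq ht
  have htp : 0 < t := t_pos ht
  have hAle := Aa_le hL hM ht
  have hLp : 0 < L := by linarith
  -- (L*s + M*t)^2 ≥ 4 * Aa * s^2
  have h4 : 4 * Aa L M d t * s ^ 2 ≤ (L * s + M * t) ^ 2 := by
    have hb' : 4 * (L + M + 2) * t * s ^ 2 ≤ L ^ 2 * s ^ 2 + M ^ 2 * t ^ 2 := by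
      rw [hssq]; linarith
    have hA4 : 4 * Aa L M d t * s ^ 2 ≤ 4 * (L + M + 2) * t * s ^ 2 := by
      nlinarith [mul_le_mul_of_nonneg_right hAle (by positivity : (0:ℝ) ≤ 4 * s ^ 2)]
    nlinarith [mul_nonneg (mul_nonneg (mul_nonneg hLp.le hM.le) hs.le) htp.le]
  have hF : Aa L M d t ≤ ((L + M * t / s) / 2) ^ 2 := by
    have hc : L + M * t / s = (L * s + M * t) / s := by
      field_simp
    rw [hc, div_div, div_pow, le_div_iff₀ (by positivity)]
    nlinarith
  have h5 : Real.sqrt (Aa L M d t) ≤ (L + M * t / s) / 2 := by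
    have := Real.sqrt_le_sqrt hF
    rwa [Real.sqrt_sq (by positivity)] at this
  unfold h
  rw [← hsdef]
  linarith

/-- General sufficient condition for `h t ≤ 0`. -/
lemma h_nonpos (hL : 2 < L) (hM : 0 < M) (ht : |d| < t)
    (hb1 : 2 * |d| ≤ t) (hb2 : (L + 2 * M) ^ 2 + 8 * |d| ≤ 4 * L * t) :
    h L M d t ≤ 0 := by
  set s := Real.sqrt (t ^ 2 - d ^ 2) with hsdef
  have hs : 0 < s := S_pos ht
  have hssq : s ^ 2 = t ^ 2 - d ^ 2 := S_sq ht
  have htp : 0 < t := t_pos ht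
  have habs : 0 ≤ |d| := abs_nonneg d
  have hdsq : d ^ 2 = |d| ^ 2 := (sq_abs d).symm
  -- t ≤ 2 s
  have hts : t ≤ 2 * s := by
    apply le_of_sq_le_sq htp.le (by positivity)
    have : (2 * |d|) ^ 2 ≤ t ^ 2 := by nlinarith
    nlinarith
  have hF : M * t / s ≤ 2 * M := by
    rw [div_le_iff₀ hs]
    nlinarith
  -- (L + 2M) ≤ 2 √(Aa)
  have hAge : ((L + 2 * M) / 2) ^ 2 ≤ Aa L M d t := by
    have h1 : -|d| ≤ d := neg_abs_le d
    have hsnn : 0 ≤ s := hs.le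
    unfold Aa
    rw [← hsdef]
    nlinarith
  have h5 : (L + 2 * M) / 2 ≤ Real.sqrt (Aa L M d t) :=
    Real.le_sqrt_of_sq_le hAge
  unfold h
  rw [← hsdef]
  linarith

lemma exists_low (hL : 2 < L) (hM : 0 < M) (d : ℝ) :
    ∃ a, |d| < a ∧ 0 ≤ h L M d a := by
  have hLp : 0 < L := by linarith
  by_cases hd : d = 0
  · subst hd
    refine ⟨L ^ 2 / (8 * (L + M + 2)), by rw [abs_zero]; positivity, ?_⟩
    apply h_nonneg hL hM (by rw [abs_zero]; positivity)
    set a := L ^ 2 / (8 * (L + M + 2)) with hadef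
    have ha : a * (8 * (L + M + 2)) = L ^ 2 := by
      rw [hadef]; field_simp
    have hap : 0 < a := by positivity
    have ha3 : a * (8 * (L + M + 2)) * a ^ 2 = L ^ 2 * a ^ 2 := by rw [ha]
    have h0 : (0:ℝ) ^ 2 = 0 := by norm_num
    rw [h0, sub_zero]
    nlinarith [sq_nonneg (M * a), sq_nonneg (L * a)]
  · have hdp : 0 < |d| := abs_pos.mpr hd
    set ε := min |d| (M ^ 2 / (12 * (L + M + 2))) with hεdef
    have hεp : 0 < ε := lt_min hdp (by positivity)
    have hε1 : ε ≤ |d| := min_le_left _ _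
    have hε2 : ε ≤ M ^ 2 / (12 * (L + M + 2)) := min_le_right _ _
    refine ⟨|d| + ε, by linarith, ?_⟩
    apply h_nonneg hL hM (by linarith)
    set a := |d| + ε with hadef
    have hdsq : d ^ 2 = |d| ^ 2 := (sq_abs d).symm
    have hsub : a ^ 2 - d ^ 2 = ε * (2 * |d| + ε) := by rw [hadef, hdsq]; ring
    have hkey : a ^ 2 - d ^ 2 ≤ 3 * ε * |d| := by rw [hsub]; nlinarith
    have hkey2 : 4 * (L + M + 2) * (a ^ 2 - d ^ 2) ≤ M ^ 2 * |d| := by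
      have h12 : 0 < 12 * (L + M + 2) := by positivity
      calc 4 * (L + M + 2) * (a ^ 2 - d ^ 2) ≤ 4 * (L + M + 2) * (3 * ε * |d|) := by
            apply mul_le_mul_of_nonneg_left hkey (by positivity)
        _ = (ε * (12 * (L + M + 2))) * |d| := by ring
        _ ≤ M ^ 2 * |d| := by
            apply mul_le_mul_of_nonneg_right _ (abs_nonneg d)
            rw [← le_div_iff₀ h12]; exact hε2
    have hda : |d| ≤ a := by rw [hadef]; linarith
    have hap : 0 < a := by rw [hadef]; linarith
    have hsubpos : 0 < a ^ 2 - d ^ 2 := by rw [hsub]; positivity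
    nlinarith [mul_le_mul_of_nonneg_left hda (by positivity : (0:ℝ) ≤ M ^ 2 * a),
      sq_nonneg (L * a), mul_pos hLp hLp,
      mul_le_mul_of_nonneg_right hkey2 hap.le, sq_nonneg a]

lemma exists_high (hL : 2 < L) (hM : 0 < M) (d : ℝ) :
    ∃ b, |d| < b ∧ h L M d b ≤ 0 := by
  have hLp : 0 < L := by linarith
  refine ⟨2 * |d| + 1 + ((L + 2 * M) ^ 2 + 8 * |d|) / (4 * L), ?_, ?_⟩
  · have h1 : 0 ≤ |d| := abs_nonneg d
    have h2 : 0 ≤ ((L + 2 * M) ^ 2 + 8 * |d|) / (4 * L) := by positivity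
    linarith
  · have h1 : 0 ≤ |d| := abs_nonneg d
    have h2 : 0 < ((L + 2 * M) ^ 2 + 8 * |d|) / (4 * L) := by positivity
    apply h_nonpos hL hM (by linarith) (by linarith)
    have hQ : ((L + 2 * M) ^ 2 + 8 * |d|) / (4 * L) * (4 * L) = (L + 2 * M) ^ 2 + 8 * |d| := by
      field_simp
    nlinarith [mul_nonneg hLp.le h1]

end DiagFP

open DiagFP in
/-- For each `λ > 1` and `d ∈ ℝ` there exists a unique `p` with `p > 0` and
`p² > |d|` such that `x = y = p` satisfies the criticality equation
`L + M p²/√(p⁴−d²) = 2√(A(p,p,d))`, i.e. `p = φ(p,d)`. -/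
theorem exists_unique_diagonal_fixed_point (l : ℝ) (hl : 1 < l) (d : ℝ) :
    ∃! p : ℝ, 0 < p ∧ |d| < p ^ 2 ∧
      (l ^ 2 + 1 / l ^ 2)
          + (l ^ 2 - 1 / l ^ 2) * p ^ 2 / Real.sqrt (p ^ 4 - d ^ 2)
        = 2 * Real.sqrt (Afun l p p d) := by
  have hl0 : 0 < l := lt_trans one_pos hl
  set L : ℝ := l ^ 2 + 1 / l ^ 2 with hLdef
  set M : ℝ := l ^ 2 - 1 / l ^ 2 with hMdef
  have hl2 : 1 < l ^ 2 := by nlinarith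
  have hinv : 1 / l ^ 2 < 1 := by
    rw [div_lt_one (by positivity)]; exact hl2
  have hinvpos : 0 < 1 / l ^ 2 := by positivity
  have hL : 2 < L := by
    have hne : 0 < (l - 1 / l) ^ 2 := by
      have : 1 / l < 1 := by rw [div_lt_one hl0]; exact hl
      have : 0 < l - 1 / l := by linarith
      positivity
    have hexp : (l - 1 / l) ^ 2 = l ^ 2 + 1 / l ^ 2 - 2 := by
      field_simp; ring
    rw [hLdef]; linarith [hexp ▸ hne]
  have hM : 0 < M := by rw [hMdef]; linarith
  -- key reformulation: the equation for p equals `h L M d (p^2) = 0`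
  have hiff : ∀ p : ℝ, 0 < p → |d| < p ^ 2 →
      ((L + M * p ^ 2 / Real.sqrt (p ^ 4 - d ^ 2) = 2 * Real.sqrt (Afun l p p d)) ↔
        h L M d (p ^ 2) = 0) := by
    intro p hp hpd
    have e1 : p ^ 4 - d ^ 2 = (p ^ 2) ^ 2 - d ^ 2 := by ring
    have e2 : Afun l p p d = Aa L M d (p ^ 2) := by
      unfold Afun Aa
      have : p ^ 2 * p ^ 2 = (p ^ 2) ^ 2 := by ring
      rw [this, ← hLdef, ← hMdef]
      ring
    rw [e1, e2]
    unfold h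
    constructor
    · intro he; rw [he]; ring
    · intro he; linarith [he]
  -- existence via IVT
  obtain ⟨a, ha, hha⟩ := exists_low hL hM d
  obtain ⟨b, hb, hhb⟩ := exists_high hL hM d
  have hanti := h_strictAntiOn (d := d) hL hM
  have hab : a ≤ b := by
    by_contra hcon
    push_neg at hcon
    have := hanti (Set.mem_Ioi.mpr hb) (Set.mem_Ioi.mpr ha) hcon
    linarith
  have hsub : Set.Icc (h L M d b) (h L M d a) ⊆ h L M d '' Set.Icc a b :=
    intermediate_value_Icc' hab (h_contOn ha)
  obtain ⟨t₀, ht₀mem, ht₀⟩ := hsub ⟨hhb, hha⟩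
  have ht₀d : |d| < t₀ := lt_of_lt_of_le ha ht₀mem.1
  have ht₀p : 0 < t₀ := t_pos ht₀d
  refine ⟨Real.sqrt t₀, ?_, ?_⟩
  · have hsq : Real.sqrt t₀ ^ 2 = t₀ := Real.sq_sqrt ht₀p.le
    have hp : 0 < Real.sqrt t₀ := Real.sqrt_pos.mpr ht₀p
    refine ⟨hp, by rw [hsq]; exact ht₀d, ?_⟩
    rw [hiff _ hp (by rw [hsq]; exact ht₀d), hsq]
    exact ht₀
  · rintro q ⟨hq0, hqd, hqe⟩
    have hqh : h L M d (q ^ 2) = 0 := (hiff q hq0 hqd).mp hqe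
    have hsq : Real.sqrt t₀ ^ 2 = t₀ := Real.sq_sqrt ht₀p.le
    have hteq : q ^ 2 = t₀ := by
      have := hanti.injOn (Set.mem_Ioi.mpr hqd) (Set.mem_Ioi.mpr ht₀d)
        (by rw [hqh, ht₀])
      exact this
    calc q = Real.sqrt (q ^ 2) := (Real.sqrt_sq hq0.le).symm
    _ = Real.sqrt t₀ := by rw [hteq]
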